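/- arXiv:2311.15225 — 2 statements merged into one kernel-verified Lean document; each statement's English description precedes it below -/
import Mathlib

section
/- For every integer C ≥ 2, every probability vector p = (p₁, …, p_C) (p_i ≥ 0, Σᵢ pᵢ = 1), and every index c with p_c ≥ 1/2, one has H₂(p_c) ≥ H(p) / log₂ C, where H₂ is the binary entropy in bits and H(p) is the Shannon entropy of p in bits. -/
/-- Binary entropy in bits: H₂(q) = −q·log₂ q − (1−q)·log₂(1−q), with 0·log₂ 0 = 0
(automatic since `Real.logb 2 0 = 0`). -/
noncomputable def binEnt (q : ℝ) : ℝ :=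
  -(q * Real.logb 2 q) - (1 - q) * Real.logb 2 (1 - q)

/-- Shannon entropy in bits of a probability vector over `Fin C`, with 0·log₂ 0 = 0. -/
noncomputable def shannonEnt {C : ℕ} (p : Fin C → ℝ) : ℝ :=
  -∑ i, p i * Real.logb 2 (p i)

/-!
Work in nats. Grouping every outcome other than `c` into one and applying Jensen's inequality to
the concave `negMulLog` gives the Fano-type bound `H(p) ≤ h(q) + (1 - q) log (C - 1)`, where
`q = p c` and `h` is the binary entropy. Concavity of `h` puts it above its chord on `[1/2, 1]`,
so `2 (1 - q) log 2 ≤ h(q)`; together with `log (C - 1) ≤ 2 (log C - log 2)`, i.e. `(C - 2)² ≥ 0`,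
this bounds `(1 - q) log (C - 1)` by `h(q) (log C / log 2 - 1)`, whence `H(p) ≤ h(q) log₂ C`.
-/

open Real Finset

lemma binEnt_eq_binEntropy_div_log_two (q : ℝ) : binEnt q = binEntropy q / log 2 := by
  rw [binEnt, binEntropy_eq_negMulLog_add_negMulLog_one_sub, negMulLog, negMulLog, logb, logb]
  ring

lemma shannonEnt_eq_sum_negMulLog_div_log_two {C : ℕ} (p : Fin C → ℝ) :
    shannonEnt p = (∑ i, negMulLog (p i)) / log 2 := by
  simp only [shannonEnt, negMulLog, logb, sum_div, ← sum_neg_distrib]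
  congr 1 with i
  ring

lemma sum_negMulLog_le_negMulLog_sum_add {ι : Type*} (t : Finset ι) (f : ι → ℝ)
    (hf : ∀ i ∈ t, 0 ≤ f i) :
    ∑ i ∈ t, negMulLog (f i) ≤ negMulLog (∑ i ∈ t, f i) + (∑ i ∈ t, f i) * log #t := by
  rcases t.eq_empty_or_nonempty with rfl | ht
  · simp
  have hn : (0 : ℝ) < #t := by exact_mod_cast ht.card_pos
  have hw : ∑ _i ∈ t, (#t : ℝ)⁻¹ = 1 := by
    rw [sum_const, nsmul_eq_mul, mul_inv_cancel₀ hn.ne']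
  have hjensen := concaveOn_negMulLog.le_map_sum (fun _ _ => by positivity) hw hf
  simp only [smul_eq_mul, ← mul_sum, negMulLog_mul] at hjensen
  have hinv : negMulLog (#t : ℝ)⁻¹ = (#t : ℝ)⁻¹ * log #t := by
    rw [negMulLog, log_inv]; ring
  rw [hinv] at hjensen
  have := mul_le_mul_of_nonneg_left hjensen hn.le
  field_simp at this
  linarith

lemma sum_negMulLog_le_binEntropy_add {ι : Type*} [Fintype ι] [DecidableEq ι] (p : ι → ℝ)
    (hp0 : ∀ i, 0 ≤ p i) (hp1 : ∑ i, p i = 1) (c : ι) :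
    ∑ i, negMulLog (p i) ≤ binEntropy (p c) + (1 - p c) * log (Fintype.card ι - 1) := by
  have hrest : ∑ i ∈ univ.erase c, p i = 1 - p c := by
    rw [← hp1, ← add_sum_erase _ p (mem_univ c), add_sub_cancel_left]
  have hcard : ((#(univ.erase c) : ℕ) : ℝ) = Fintype.card ι - 1 := by
    rw [card_erase_of_mem (mem_univ c), card_univ, Nat.cast_pred (Fintype.card_pos_iff.2 ⟨c⟩)]
  have := sum_negMulLog_le_negMulLog_sum_add (univ.erase c) p (fun i _ => hp0 i)
  rw [hrest, hcard] at this
  rw [← add_sum_erase _ _ (mem_univ c), binEntropy_eq_negMulLog_add_negMulLog_one_sub]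
  linarith

lemma two_mul_one_sub_mul_log_two_le_binEntropy {q : ℝ} (hq : 1 / 2 ≤ q) (hq1 : q ≤ 1) :
    2 * (1 - q) * log 2 ≤ binEntropy q := by
  have := strictConcave_binEntropy.concaveOn.2 (by norm_num : (2⁻¹ : ℝ) ∈ Set.Icc 0 1)
    (by norm_num : (1 : ℝ) ∈ Set.Icc 0 1) (by linarith : (0 : ℝ) ≤ 2 * (1 - q))
    (by linarith : (0 : ℝ) ≤ 2 * q - 1) (by ring)
  rw [binEntropy_two_inv, binEntropy_one, smul_eq_mul, smul_eq_mul, smul_eq_mul, smul_eq_mul,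
    show 2 * (1 - q) * 2⁻¹ + (2 * q - 1) * 1 = q by ring] at this
  linarith

lemma log_sub_one_add_two_mul_log_two_le {x : ℝ} (hx : 1 < x) :
    log (x - 1) + 2 * log 2 ≤ 2 * log x := by
  have h4 : (4 : ℝ) = 2 ^ 2 := by norm_num
  calc log (x - 1) + 2 * log 2 = log (4 * (x - 1)) := by
        rw [log_mul (by norm_num) (by linarith), h4, log_pow]; push_cast; ring
    _ ≤ log (x ^ 2) := log_le_log (by linarith) (by nlinarith [sq_nonneg (x - 2)])
    _ = 2 * log x := by rw [log_pow]; push_cast; ring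

lemma sum_negMulLog_le_binEntropy_mul_logb {ι : Type*} [Fintype ι] (p : ι → ℝ)
    (hp0 : ∀ i, 0 ≤ p i) (hp1 : ∑ i, p i = 1) (hcard : 2 ≤ Fintype.card ι) (c : ι)
    (hc : 1 / 2 ≤ p c) :
    ∑ i, negMulLog (p i) ≤ binEntropy (p c) * logb 2 (Fintype.card ι) := by
  classical
  set q := p c
  have hn : (2 : ℝ) ≤ Fintype.card ι := by exact_mod_cast hcard
  set n : ℝ := (Fintype.card ι : ℝ)
  have hq1 : q ≤ 1 := hp1 ▸ single_le_sum (fun i _ => hp0 i) (mem_univ c)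
  have hlog2 : 0 < log 2 := log_pos one_lt_two
  have hfano := sum_negMulLog_le_binEntropy_add p hp0 hp1 c
  have hchord := two_mul_one_sub_mul_log_two_le_binEntropy hc hq1
  have hlogn := log_sub_one_add_two_mul_log_two_le (x := n) (by linarith)
  have hlog2n : 0 ≤ log n - log 2 := sub_nonneg.2 (log_le_log two_pos hn)
  rw [logb, mul_div_assoc', le_div_iff₀ hlog2]
  calc (∑ i, negMulLog (p i)) * log 2
      ≤ (binEntropy q + (1 - q) * log (n - 1)) * log 2 := by gcongr
    _ ≤ binEntropy q * log 2 + 2 * (1 - q) * log 2 * (log n - log 2) := by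
        linarith [mul_le_mul_of_nonneg_left hlogn (mul_nonneg (sub_nonneg.2 hq1) hlog2.le)]
    _ ≤ binEntropy q * log 2 + binEntropy q * (log n - log 2) := by
        gcongr
    _ = binEntropy q * log n := by ring

/-- For every integer C ≥ 2, every probability vector p over C classes, and every index c
with p_c ≥ 1/2, one has H₂(p_c) ≥ H(p) / log₂ C. -/
theorem stmt_1 (C : ℕ) (hC : 2 ≤ C) (p : Fin C → ℝ)
    (hp0 : ∀ i, 0 ≤ p i) (hp1 : (∑ i, p i) = 1) (c : Fin C) (hc : 1 / 2 ≤ p c) :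
    shannonEnt p / Real.logb 2 (C : ℝ) ≤ binEnt (p c) := by
  have hbound := sum_negMulLog_le_binEntropy_mul_logb p hp0 hp1 (by simpa using hC) c hc
  rw [Fintype.card_fin] at hbound
  have hlogC : 0 < logb 2 (C : ℝ) := logb_pos one_lt_two (by exact_mod_cast hC)
  rw [div_le_iff₀ hlogC, shannonEnt_eq_sum_negMulLog_div_log_two, binEnt_eq_binEntropy_div_log_two,
    div_mul_eq_mul_div]
  gcongr
end

section
/- Let p = (p₁, …, p_C) be a probability vector (p_i ≥ 0, Σᵢ pᵢ = 1) with C ≥ 2, and let c′ be an index at which p attains its maximum, i.e., p_{c′} ≥ pᵢ for all i. Then c′ also maximizes the binary entropy of the coordinates: H₂(p_{c′}) ≥ H₂(pᵢ) for every index i, where H₂ is the binary entropy in bits. -/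
lemma binEnt_eq (q : ℝ) : binEnt q = Real.binEntropy q / Real.log 2 := by
  simp [binEnt, Real.binEntropy, Real.logb, Real.log_inv]
  ring

/-- The coordinate with the largest probability also maximizes the binary entropy
of the coordinates. -/
theorem stmt_10 (C : ℕ) (hC : 2 ≤ C) (p : Fin C → ℝ)
    (hp0 : ∀ i, 0 ≤ p i) (hp1 : (∑ i, p i) = 1) (c' : Fin C)
    (hmax : ∀ i, p i ≤ p c') :
    ∀ i, binEnt (p i) ≤ binEnt (p c') := by
  intro i
  rcases eq_or_ne i c' with rfl | hne
  · exact le_refl _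
  · -- p i + p c' ≤ 1
    have hsum : p i + p c' ≤ 1 := by
      rw [← hp1]
      have : ({i, c'} : Finset (Fin C)) ⊆ Finset.univ := Finset.subset_univ _
      calc p i + p c' = ∑ j ∈ ({i, c'} : Finset (Fin C)), p j := by
            rw [Finset.sum_pair hne]
        _ ≤ ∑ j, p j := Finset.sum_le_sum_of_subset_of_nonneg this (fun j _ _ => hp0 j)
    have hpc1 : p c' ≤ 1 := by linarith [hp0 i]
    set m := min (p c') (1 - p c') with hm
    have hm2 : m ≤ 2⁻¹ := by
      rcases le_total (p c') (1 - p c') with h | h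
      · simp [hm, min_eq_left h]; linarith
      · simp [hm, min_eq_right h]; linarith
    have hpim : p i ≤ m := le_min (hmax i) (by linarith)
    have hmono := Real.binEntropy_strictMonoOn.monotoneOn
    have h1 : Real.binEntropy (p i) ≤ Real.binEntropy m := by
      apply hmono ⟨hp0 i, le_trans hpim hm2⟩ ⟨le_min (hp0 c') (by linarith), hm2⟩ hpim
    have h2 : Real.binEntropy m = Real.binEntropy (p c') := by
      rcases le_total (p c') (1 - p c') with h | h
      · rw [hm, min_eq_left h]
      · rw [hm, min_eq_right h, Real.binEntropy_one_sub]
    rw [binEnt_eq, binEnt_eq]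
    apply div_le_div_of_nonneg_right _ (Real.log_pos one_lt_two).le
    · rw [← h2]; exact h1
end
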